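/- For every n ∈ ℕ there exists a constant C_n > 0, independent of a, r, β and T, such that: for all a ≥ 0, r > 0, β ∈ (0, π/2], T ≥ 2, and all (t,s) with t ∈ [0,1], s ∈ ℝ and 2 ≤ φ(t,s) ≤ T, and for all nonnegative integers i, j with i + j ≤ n, one has |∂_t^i ∂_s^j ( ∂²φ/∂s∂t )(t,s)| ≤ C_n e^{(18n + 22) T}. -/

import Mathlib

/-!
Write `Ψ = A / (4 r e^{s+t}) = ∑ᵢ cᵢ e^{±t ± s}` with `cᵢ ≥ 0`, so that `φ = arcosh Ψ`. Each of the
four exponential terms is an eigenfunction of `∂_t` and of `∂_s` with eigenvalue `±1`, so on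
polynomials in these terms `∂_t` and `∂_s` act as the derivations `∑ᵢ wᵢ Xᵢ ∂/∂Xᵢ` with `wᵢ = ±1`.
Differentiating `φ_t = Ψ_t / √(Ψ² - 1)` repeatedly gives
`∂_t^i ∂_s^j φ_st = N / (Ψ² - 1)^(k + 1/2)` with `k = i + j + 1`, where `N` is a fixed
polynomial of degree at most `2k + 1`, independent of `a`, `r` and `β`. Every term lies between
`0` and `Ψ`, so `|N| ≤ ‖N‖₁ Ψ^(2k+1)`, and `Ψ ≤ 2 √(Ψ² - 1)` as soon as `Ψ ≥ 2`, which follows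
from `φ ≥ 2`. The derivatives are therefore even bounded independently of `T`.
-/

open Real

noncomputable section

/-- Inverse hyperbolic cosine. -/
def arcosh (x : ℝ) : ℝ := Real.log (x + Real.sqrt (x ^ 2 - 1))

/-- `d₁ = √(a² + r² − 2ar cos β)`. -/
def d1 (a r β : ℝ) : ℝ := Real.sqrt (a ^ 2 + r ^ 2 - 2 * a * r * Real.cos β)

/-- `d₂ = √(a² + r² + 2ar cos β)`. -/
def d2 (a r β : ℝ) : ℝ := Real.sqrt (a ^ 2 + r ^ 2 + 2 * a * r * Real.cos β)

/-- `A(t,s) = e^{2s+2t} + e^{2t} + d₁² e^{2s} + d₂²`. -/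
def Afun (a r β t s : ℝ) : ℝ :=
  Real.exp (2 * s + 2 * t) + Real.exp (2 * t) + d1 a r β ^ 2 * Real.exp (2 * s) +
    d2 a r β ^ 2

/-- `φ(t,s) = arcosh(A(t,s)/(4 r e^{s+t}))`, the lifted distance function. -/
def phi (a r β t s : ℝ) : ℝ := _root_.arcosh (Afun a r β t s / (4 * r * Real.exp (s + t)))

open Set

theorem eqOn_iteratedDeriv_of_hasDerivAt {𝕜 F : Type*} [NontriviallyNormedField 𝕜]
    [NormedAddCommGroup F] [NormedSpace 𝕜 F] {U : Set 𝕜} (hU : IsOpen U) {f : 𝕜 → F}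
    {g : ℕ → 𝕜 → F} (hf : EqOn f (g 0) U) (hg : ∀ k, ∀ x ∈ U, HasDerivAt (g k) (g (k + 1) x) x)
    (k : ℕ) : EqOn (iteratedDeriv k f) (g k) U := by
  induction k with
  | zero => simpa using hf
  | succ k ih =>
    intro x hx
    have hloc : iteratedDeriv k f =ᶠ[nhds x] g k :=
      Filter.eventually_of_mem (hU.mem_nhds hx) ih
    rw [iteratedDeriv_succ, hloc.deriv_eq, (hg k x hx).deriv]

theorem hasDerivAt_div_sqrt_sq_sub_one_pow {f ψ : ℝ → ℝ} {f' ψ' t : ℝ} (k : ℕ)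
    (hf : HasDerivAt f f' t) (hψ : HasDerivAt ψ ψ' t) (h1 : 1 < ψ t) :
    HasDerivAt (fun t => f t / √(ψ t ^ 2 - 1) ^ (2 * k + 1))
      ((f' * (ψ t ^ 2 - 1) - (2 * k + 1) * f t * ψ t * ψ') / √(ψ t ^ 2 - 1) ^ (2 * (k + 1) + 1))
      t := by
  have hpos : 0 < ψ t ^ 2 - 1 := by nlinarith
  have hS : 0 < √(ψ t ^ 2 - 1) := Real.sqrt_pos.2 hpos
  have hsq : √(ψ t ^ 2 - 1) ^ 2 = ψ t ^ 2 - 1 := Real.sq_sqrt hpos.le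
  have hsub : HasDerivAt (fun t => ψ t ^ 2 - 1) (2 * ψ t * ψ') t := by
    simpa using (hψ.fun_pow 2).sub_const 1
  have hpow := (hsub.sqrt hpos.ne').fun_pow (2 * k + 1)
  refine (hf.div hpow (by positivity)).congr_deriv ?_
  set S := √(ψ t ^ 2 - 1)
  rw [← hsq]
  field_simp
  push_cast
  ring

theorem two_le_of_two_le_arcosh {x : ℝ} (hx : 0 < x) (h : 2 ≤ Real.arcosh x) : 2 ≤ x := by
  have he : 5 ≤ exp 2 := by linarith [quadratic_le_exp_of_nonneg (zero_le_two (α := ℝ))]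
  have hsqrt : √(x ^ 2 - 1) ≤ x := Real.sqrt_le_iff.2 ⟨hx.le, by linarith⟩
  have : exp 2 ≤ x + √(x ^ 2 - 1) := by
    rw [← exp_log (by positivity : 0 < x + √(x ^ 2 - 1))]
    exact exp_le_exp.2 h
  linarith

namespace MvPolynomial

variable {σ : Type*}

theorem hasDerivAt_eval_of_derivation {𝕜 : Type*} [NontriviallyNormedField 𝕜]
    (D : Derivation 𝕜 (MvPolynomial σ 𝕜) (MvPolynomial σ 𝕜)) {x : 𝕜 → σ → 𝕜} {t : 𝕜}
    (hx : ∀ i, HasDerivAt (fun t => x t i) (eval (x t) (D (X i))) t) (p : MvPolynomial σ 𝕜) :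
    HasDerivAt (fun t => eval (x t) p) (eval (x t) (D p)) t := by
  induction p using MvPolynomial.induction_on with
  | C a => simpa using hasDerivAt_const t a
  | add p q hp hq =>
    simp only [map_add]
    exact hp.add hq
  | mul_X p i hp =>
    simp only [map_mul, eval_X, Derivation.leibniz, smul_eq_mul, map_add]
    exact (hp.mul (hx i)).congr_deriv (by ring)

section WeightedEuler

variable {R : Type*} [CommRing R]

def weightedEuler (w : σ → R) : Derivation R (MvPolynomial σ R) (MvPolynomial σ R) :=
  mkDerivation R fun i => C (w i) * X i

@[simp]
theorem weightedEuler_X (w : σ → R) (i : σ) : weightedEuler w (X i) = C (w i) * X i :=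
  mkDerivation_X R _ i

theorem weightedEuler_monomial (w : σ → R) (m : σ →₀ ℕ) (c : R) :
    weightedEuler w (monomial m c) = monomial m (c * Finsupp.weight w m) := by
  classical
  rw [weightedEuler, mkDerivation_monomial, Finsupp.weight_apply, Finsupp.sum, Finsupp.sum,
    Finset.mul_sum, map_sum, Finset.smul_sum]
  refine Finset.sum_congr rfl fun i hi => ?_
  have hle : Finsupp.single i 1 ≤ m :=
    Finsupp.single_le_iff.2 (Nat.one_le_iff_ne_zero.2 (Finsupp.mem_support_iff.1 hi))
  rw [smul_eq_mul, X, C_mul_monomial, monomial_mul, tsub_add_cancel_of_le hle, smul_monomial,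
    nsmul_eq_mul]
  congr 1
  ring

theorem coeff_weightedEuler (w : σ → R) (m : σ →₀ ℕ) (p : MvPolynomial σ R) :
    coeff m (weightedEuler w p) = coeff m p * Finsupp.weight w m := by
  classical
  induction p using MvPolynomial.induction_on' with
  | monomial m' c =>
    rw [weightedEuler_monomial, coeff_monomial, coeff_monomial]
    split_ifs with h <;> simp [h]
  | add p q hp hq => simp only [map_add, coeff_add, hp, hq, add_mul]

theorem totalDegree_weightedEuler_le (w : σ → R) (p : MvPolynomial σ R) :
    (weightedEuler w p).totalDegree ≤ p.totalDegree := by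
  refine totalDegree_le_of_support_subset fun m hm => ?_
  rw [mem_support_iff, coeff_weightedEuler] at hm
  exact mem_support_iff.2 (left_ne_zero_of_mul hm)

end WeightedEuler

theorem abs_eval_le {x : σ → ℝ} {B : ℝ} (hB : 1 ≤ B) (hx : ∀ i, |x i| ≤ B)
    (p : MvPolynomial σ ℝ) :
    |eval x p| ≤ (∑ m ∈ p.support, |coeff m p|) * B ^ p.totalDegree := by
  rw [eval_eq, Finset.sum_mul]
  refine (Finset.abs_sum_le_sum_abs _ _).trans (Finset.sum_le_sum fun m hm => ?_)
  rw [abs_mul, Finset.abs_prod]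
  gcongr
  calc ∏ i ∈ m.support, |x i ^ m i| ≤ ∏ i ∈ m.support, B ^ m i := by
        gcongr with i; rw [abs_pow]; exact pow_le_pow_left₀ (abs_nonneg _) (hx i) _
    _ = B ^ (m.sum fun _ e => e) := Finset.prod_pow_eq_pow_sum _ _ _
    _ ≤ B ^ p.totalDegree := pow_le_pow_right₀ hB (le_totalDegree hm)

section ArcoshQuotient

variable (ψ : MvPolynomial σ ℝ)

def arcoshQuotient (N : MvPolynomial σ ℝ) (k : ℕ) (x : σ → ℝ) : ℝ :=
  eval x N / √(eval x ψ ^ 2 - 1) ^ (2 * k + 1)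

def nextNumerator (D : Derivation ℝ (MvPolynomial σ ℝ) (MvPolynomial σ ℝ))
    (k : ℕ) (N : MvPolynomial σ ℝ) : MvPolynomial σ ℝ :=
  D N * (ψ ^ 2 - 1) - C (2 * k + 1 : ℝ) * N * ψ * D ψ

def iterNumerator (D : Derivation ℝ (MvPolynomial σ ℝ) (MvPolynomial σ ℝ))
    (N : MvPolynomial σ ℝ) (k : ℕ) : ℕ → MvPolynomial σ ℝ
  | 0 => N
  | i + 1 => nextNumerator ψ D (k + i) (iterNumerator D N k i)

variable {ψ} {D : Derivation ℝ (MvPolynomial σ ℝ) (MvPolynomial σ ℝ)} {x : ℝ → σ → ℝ}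

theorem hasDerivAt_arcosh_eval {t : ℝ}
    (hx : ∀ i, HasDerivAt (fun t => x t i) (eval (x t) (D (X i))) t) (h1 : 1 < eval (x t) ψ) :
    HasDerivAt (fun t => Real.arcosh (eval (x t) ψ)) (arcoshQuotient ψ (D ψ) 0 (x t)) t := by
  refine ((Real.hasDerivAt_arcosh h1).comp t (hasDerivAt_eval_of_derivation D hx ψ)).congr_deriv ?_
  simp [arcoshQuotient, div_eq_inv_mul]

theorem hasDerivAt_arcoshQuotient {t : ℝ}
    (hx : ∀ i, HasDerivAt (fun t => x t i) (eval (x t) (D (X i))) t) (h1 : 1 < eval (x t) ψ)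
    (N : MvPolynomial σ ℝ) (k : ℕ) :
    HasDerivAt (fun t => arcoshQuotient ψ N k (x t))
      (arcoshQuotient ψ (nextNumerator ψ D k N) (k + 1) (x t)) t := by
  refine (hasDerivAt_div_sqrt_sq_sub_one_pow k (hasDerivAt_eval_of_derivation D hx N)
    (hasDerivAt_eval_of_derivation D hx ψ) h1).congr_deriv ?_
  simp [arcoshQuotient, nextNumerator]

theorem eqOn_iteratedDeriv_arcoshQuotient
    (hx : ∀ t i, HasDerivAt (fun t => x t i) (eval (x t) (D (X i))) t) {f : ℝ → ℝ}
    {N : MvPolynomial σ ℝ} {k : ℕ}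
    (hf : EqOn f (fun t => arcoshQuotient ψ N k (x t)) {t | 1 < eval (x t) ψ}) (i : ℕ) :
    EqOn (iteratedDeriv i f) (fun t => arcoshQuotient ψ (iterNumerator ψ D N k i) (k + i) (x t))
      {t | 1 < eval (x t) ψ} := by
  have hψ : Continuous fun t => eval (x t) ψ := continuous_iff_continuousAt.2 fun t =>
    (hasDerivAt_eval_of_derivation D (hx t) ψ).continuousAt
  refine eqOn_iteratedDeriv_of_hasDerivAt (isOpen_lt continuous_const hψ)
    (g := fun i t => arcoshQuotient ψ (iterNumerator ψ D N k i) (k + i) (x t)) hf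
    (fun i t ht => ?_) i
  exact hasDerivAt_arcoshQuotient (hx t) ht _ _

theorem totalDegree_iterNumerator_le (hψ : ψ.totalDegree ≤ 1)
    (hD : ∀ p, (D p).totalDegree ≤ p.totalDegree) (N : MvPolynomial σ ℝ) (k i : ℕ) :
    (iterNumerator ψ D N k i).totalDegree ≤ N.totalDegree + 2 * i := by
  induction i with
  | zero => simp [iterNumerator]
  | succ i ih =>
    set M := iterNumerator ψ D N k i
    have hsq : (ψ ^ 2 - 1).totalDegree ≤ 2 := by
      refine (totalDegree_sub _ _).trans (max_le ?_ (by simp))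
      exact (totalDegree_pow _ _).trans (by omega)
    have h1 : (D M * (ψ ^ 2 - 1)).totalDegree ≤ M.totalDegree + 2 :=
      (totalDegree_mul _ _).trans (add_le_add (hD M) hsq)
    have h2 : (C (2 * (k + i : ℕ) + 1 : ℝ) * M * ψ * D ψ).totalDegree ≤ M.totalDegree + 2 := by
      have := totalDegree_mul (C (2 * (k + i : ℕ) + 1 : ℝ) * M * ψ) (D ψ)
      have := totalDegree_mul (C (2 * (k + i : ℕ) + 1 : ℝ) * M) ψ
      have := totalDegree_mul (C (2 * (k + i : ℕ) + 1 : ℝ)) M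
      have := hD ψ
      rw [totalDegree_C] at *
      omega
    exact (totalDegree_sub _ _).trans (max_le (h1.trans (by omega)) (h2.trans (by omega)))

theorem abs_arcoshQuotient_le {x : σ → ℝ} (hx : ∀ i, |x i| ≤ eval x ψ) (h2 : 2 ≤ eval x ψ)
    {N : MvPolynomial σ ℝ} {k : ℕ} (hN : N.totalDegree ≤ 2 * k + 1) :
    |arcoshQuotient ψ N k x| ≤ (∑ m ∈ N.support, |coeff m N|) * 2 ^ (2 * k + 1) := by
  set y := eval x ψ
  have hpos : 0 < y ^ 2 - 1 := by nlinarith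
  have hS : 0 < √(y ^ 2 - 1) := Real.sqrt_pos.2 hpos
  have hsq : √(y ^ 2 - 1) ^ 2 = y ^ 2 - 1 := Real.sq_sqrt hpos.le
  have hyS : y ≤ 2 * √(y ^ 2 - 1) := by nlinarith
  have hN' : |eval x N| ≤ (∑ m ∈ N.support, |coeff m N|) * y ^ (2 * k + 1) :=
    (abs_eval_le (by linarith) hx N).trans
      (mul_le_mul_of_nonneg_left (pow_le_pow_right₀ (by linarith) hN) (by positivity))
  rw [arcoshQuotient, abs_div, abs_of_pos (pow_pos hS _), div_le_iff₀ (pow_pos hS _), mul_assoc,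
    ← mul_pow]
  exact hN'.trans (mul_le_mul_of_nonneg_left (pow_le_pow_left₀ (by linarith) hyS _) (by positivity))

end ArcoshQuotient

end MvPolynomial

open MvPolynomial

namespace LiftedDistance

def tSign : Fin 4 → ℝ := ![1, 1, -1, -1]

def sSign : Fin 4 → ℝ := ![1, -1, 1, -1]

def expTerms (a r β t s : ℝ) (i : Fin 4) : ℝ :=
  ![1, 1, d1 a r β ^ 2, d2 a r β ^ 2] i / (4 * r) * exp (tSign i * t + sSign i * s)

def sumX : MvPolynomial (Fin 4) ℝ := ∑ i, X i

variable {a r β : ℝ}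

theorem eval_sumX_expTerms (hr : 0 < r) (t s : ℝ) :
    eval (expTerms a r β t s) sumX = Afun a r β t s / (4 * r * exp (s + t)) := by
  rw [eq_div_iff (by positivity)]
  have hexp : exp (-t + -s) * exp (s + t) = 1 := by rw [← exp_add]; ring_nf; exact exp_zero
  simp only [sumX, Fin.sum_univ_four, map_add, eval_X, expTerms, tSign, sSign, Afun,
    Matrix.cons_val_zero, Matrix.cons_val_one, Matrix.cons_val, one_div, mul_inv_rev, one_mul,
    neg_mul]
  rw [show 2 * s + 2 * t = (t + s) + (s + t) by ring, show 2 * t = (t + -s) + (s + t) by ring,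
    show 2 * s = (-t + s) + (s + t) by ring, exp_add (t + s), exp_add (t + -s), exp_add (-t + s)]
  field_simp
  linear_combination d2 a r β ^ 2 * hexp

theorem phi_eq_arcosh_eval (hr : 0 < r) (t s : ℝ) :
    phi a r β t s = Real.arcosh (eval (expTerms a r β t s) sumX) := by
  rw [eval_sumX_expTerms hr]
  rfl

theorem expTerms_nonneg (hr : 0 < r) (t s : ℝ) (i : Fin 4) : 0 ≤ expTerms a r β t s i := by
  have : 0 ≤ ![1, 1, d1 a r β ^ 2, d2 a r β ^ 2] i := by fin_cases i <;> simp [sq_nonneg]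
  unfold expTerms
  positivity

theorem eval_sumX_pos (hr : 0 < r) (t s : ℝ) : 0 < eval (expTerms a r β t s) sumX := by
  simp only [sumX, map_sum, eval_X]
  refine Finset.sum_pos' (fun i _ => expTerms_nonneg hr t s i) ⟨0, Finset.mem_univ _, ?_⟩
  simp only [expTerms, Matrix.cons_val_zero]
  positivity

theorem abs_expTerms_le_eval_sumX (hr : 0 < r) (t s : ℝ) (i : Fin 4) :
    |expTerms a r β t s i| ≤ eval (expTerms a r β t s) sumX := by
  rw [abs_of_nonneg (expTerms_nonneg hr t s i)]
  simpa [sumX] using Finset.single_le_sum (fun j _ => expTerms_nonneg hr t s j) (Finset.mem_univ i)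

theorem hasDerivAt_expTerms_t (t s : ℝ) (i : Fin 4) :
    HasDerivAt (fun t => expTerms a r β t s i)
      (eval (expTerms a r β t s) (weightedEuler tSign (X i))) t := by
  refine ((((hasDerivAt_id t).const_mul (tSign i)).add_const (sSign i * s)).exp.const_mul
    (![1, 1, d1 a r β ^ 2, d2 a r β ^ 2] i / (4 * r))).congr_deriv ?_
  simp only [weightedEuler_X, map_mul, eval_C, eval_X, expTerms, id_eq, mul_one]
  ring

theorem hasDerivAt_expTerms_s (t s : ℝ) (i : Fin 4) :
    HasDerivAt (fun s => expTerms a r β t s i)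
      (eval (expTerms a r β t s) (weightedEuler sSign (X i))) s := by
  refine ((((hasDerivAt_id s).const_mul (sSign i)).const_add (tSign i * t)).exp.const_mul
    (![1, 1, d1 a r β ^ 2, d2 a r β ^ 2] i / (4 * r))).congr_deriv ?_
  simp only [weightedEuler_X, map_mul, eval_C, eval_X, expTerms, id_eq, mul_one]
  ring

def mixedNumerator (i j : ℕ) : MvPolynomial (Fin 4) ℝ :=
  iterNumerator sumX (weightedEuler tSign)
    (iterNumerator sumX (weightedEuler sSign) (weightedEuler tSign sumX) 0 (j + 1)) (j + 1) i

theorem iteratedDeriv_mixed_eq (hr : 0 < r) {t s : ℝ} (h1 : 1 < eval (expTerms a r β t s) sumX)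
    (i j : ℕ) :
    iteratedDeriv i (fun t' => iteratedDeriv j
      (fun s' => deriv (fun s'' => deriv (fun t'' => phi a r β t'' s'') t') s') s) t =
    arcoshQuotient sumX (mixedNumerator i j) (j + 1 + i) (expTerms a r β t s) := by
  have hφt (t' s' : ℝ) (h : 1 < eval (expTerms a r β t' s') sumX) :
      deriv (fun t'' => phi a r β t'' s') t' =
        arcoshQuotient sumX (weightedEuler tSign sumX) 0 (expTerms a r β t' s') := by
    simp only [phi_eq_arcosh_eval hr]
    exact (hasDerivAt_arcosh_eval (fun i => hasDerivAt_expTerms_t t' s' i) h).deriv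
  have hφts (t' : ℝ) : EqOn
      (fun s' => iteratedDeriv j (deriv fun s'' => deriv (fun t'' => phi a r β t'' s'') t') s')
      (fun s' => arcoshQuotient sumX
        (iterNumerator sumX (weightedEuler sSign) (weightedEuler tSign sumX) 0 (j + 1)) (j + 1)
        (expTerms a r β t' s'))
      {s' | 1 < eval (expTerms a r β t' s') sumX} := by
    intro s' hs'
    rw [← iteratedDeriv_succ']
    simpa using eqOn_iteratedDeriv_arcoshQuotient (fun s i => hasDerivAt_expTerms_s t' s i)
      (fun s' h => hφt t' s' h) (j + 1) hs'
  exact eqOn_iteratedDeriv_arcoshQuotient (fun t i => hasDerivAt_expTerms_t t s i)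
    (fun t' h => hφts t' h) i h1

theorem totalDegree_mixedNumerator_le (i j : ℕ) :
    (mixedNumerator i j).totalDegree ≤ 2 * (j + 1 + i) + 1 := by
  have hψ : sumX.totalDegree ≤ 1 :=
    (totalDegree_finsetSum _ _).trans (Finset.sup_le fun i _ => (totalDegree_X i).le)
  have h0 := totalDegree_weightedEuler_le tSign sumX
  have h1 := totalDegree_iterNumerator_le hψ (totalDegree_weightedEuler_le sSign)
    (weightedEuler tSign sumX) 0 (j + 1)
  have h2 := totalDegree_iterNumerator_le hψ (totalDegree_weightedEuler_le tSign)
    (iterNumerator sumX (weightedEuler sSign) (weightedEuler tSign sumX) 0 (j + 1)) (j + 1) i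
  rw [mixedNumerator]
  omega

end LiftedDistance

open LiftedDistance

/-- Upper bounds on all mixed derivatives `∂_t^i ∂_s^j (φ''_st)` (Lemma 4):
for each `n` there is a constant `Cₙ`, independent of `a`, `r`, `β` and `T`, such that
`|∂_t^i ∂_s^j φ''_st(t,s)| ≤ Cₙ e^{(18n+22)T}` whenever `i + j ≤ n`, `t ∈ [0,1]` and
`2 ≤ φ(t,s) ≤ T`. -/
theorem upper_bounds_mixed_derivatives (n : ℕ) :
    ∃ C : ℝ, 0 < C ∧
      ∀ (a r β T t s : ℝ), 0 ≤ a → 0 < r → β ∈ Set.Ioc 0 (π / 2) → 2 ≤ T →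
        t ∈ Set.Icc (0 : ℝ) 1 → 2 ≤ phi a r β t s → phi a r β t s ≤ T →
        ∀ i j : ℕ, i + j ≤ n →
          |iteratedDeriv i
              (fun t' => iteratedDeriv j
                (fun s' => deriv (fun s'' => deriv (fun t'' => phi a r β t'' s'') t') s') s) t| ≤
            C * Real.exp ((18 * n + 22) * T) := by
  set K : ℕ → ℕ → ℝ := fun i j =>
    (∑ m ∈ (mixedNumerator i j).support, |coeff m (mixedNumerator i j)|) * 2 ^ (2 * (j + 1 + i) + 1)
  set C := 1 + ∑ p ∈ Finset.range (n + 1) ×ˢ Finset.range (n + 1), K p.1 p.2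
  have hK : ∀ p ∈ Finset.range (n + 1) ×ˢ Finset.range (n + 1), 0 ≤ K p.1 p.2 :=
    fun p _ => by positivity
  have hC : 0 < C := by linarith [Finset.sum_nonneg hK]
  refine ⟨C, hC, fun a r β T t s _ hr _ hT _ hφ _ i j hij => ?_⟩
  have hψ : 2 ≤ eval (expTerms a r β t s) sumX :=
    two_le_of_two_le_arcosh (eval_sumX_pos hr t s) (phi_eq_arcosh_eval hr t s ▸ hφ)
  have hKC : K i j ≤ C := by
    have := Finset.single_le_sum hK (a := (i, j)) (Finset.mem_product.2
      ⟨Finset.mem_range.2 (by omega), Finset.mem_range.2 (by omega)⟩)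
    linarith
  rw [iteratedDeriv_mixed_eq hr (by linarith) i j]
  calc _ ≤ K i j := abs_arcoshQuotient_le (abs_expTerms_le_eval_sumX hr t s) hψ
        (totalDegree_mixedNumerator_le i j)
    _ ≤ C := hKC
    _ ≤ C * exp ((18 * n + 22) * T) := le_mul_of_one_le_right hC.le
      (one_le_exp (mul_nonneg (by positivity) (by linarith)))

end
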